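/- Let R be a commutative ring and n ≥ 1. If S is a subring of the matrix ring M_n(R) containing all scalar matrices rI with r ∈ R, then S ∩ U(M_n(R)) = U(S); that is, every matrix in S invertible in M_n(R) has its inverse in S. -/

import Mathlib

/-!
By Cayley–Hamilton, an invertible matrix `A` is a root of its characteristic polynomial, whose
constant term `± det A` is a unit; hence `A⁻¹` is an `R`-polynomial in `A`. A subring containing
the scalars is an `R`-subalgebra, so it contains every such polynomial in its elements.
-/

open Polynomial

/-- Splitting `p = p.divX * X + C (p.coeff 0)` and evaluating at `u` exhibits `u⁻¹` as
`-(p.coeff 0)⁻¹ • p.divX(u)`. -/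
theorem Polynomial.inv_mem_adjoin_of_aeval_eq_zero {R A : Type*} [CommRing R] [Ring A]
    [Algebra R A] (u : Aˣ) {p : R[X]} (hp : aeval (u : A) p = 0) (h0 : IsUnit (p.coeff 0)) :
    (↑u⁻¹ : A) ∈ Algebra.adjoin R {(u : A)} := by
  set c := h0.unit
  have hsplit : aeval (u : A) p.divX * u = -(c : R) • 1 := by
    have h := congrArg (aeval (u : A)) (divX_mul_X_add p)
    rw [map_add, map_mul, aeval_X, aeval_C, hp, Algebra.algebraMap_eq_smul_one] at h
    rwa [neg_smul, eq_neg_iff_add_eq_zero, IsUnit.unit_spec]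
  have hinv : (-(↑c⁻¹ : R)) • aeval (u : A) p.divX = ↑u⁻¹ := by
    refine (Units.inv_eq_of_mul_eq_one_left ?_).symm
    rw [smul_mul_assoc, hsplit, smul_smul, neg_mul_neg, Units.inv_mul, one_smul]
  rw [← hinv]
  exact Subalgebra.smul_mem _ (aeval_mem_adjoin_singleton R _) _

theorem Matrix.isUnit_charpoly_coeff_zero {R n : Type*} [CommRing R] [Fintype n] [DecidableEq n]
    {M : Matrix n n R} (h : IsUnit M.det) : IsUnit (M.charpoly.coeff 0) := by
  rw [det_eq_sign_charpoly_coeff] at h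
  exact (IsUnit.mul_iff.mp h).2

theorem Matrix.inv_mem_adjoin {R n : Type*} [CommRing R] [Fintype n] [DecidableEq n]
    (A : (Matrix n n R)ˣ) : (↑A⁻¹ : Matrix n n R) ∈ Algebra.adjoin R {(A : Matrix n n R)} :=
  inv_mem_adjoin_of_aeval_eq_zero A (aeval_self_charpoly _)
    (isUnit_charpoly_coeff_zero ((isUnit_iff_isUnit_det _).mp A.isUnit))

def Subring.toSubalgebra {R A : Type*} [CommRing R] [Ring A] [Algebra R A] (S : Subring A)
    (h : ∀ r : R, algebraMap R A r ∈ S) : Subalgebra R A :=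
  { S with algebraMap_mem' := h }

theorem stmt_9_general {R : Type*} [CommRing R]
    (n : ℕ)
    (S : Subring (Matrix (Fin n) (Fin n) R))
    (hscal : ∀ r : R, r • (1 : Matrix (Fin n) (Fin n) R) ∈ S)
    (A : (Matrix (Fin n) (Fin n) R)ˣ) (hA : A.val ∈ S) :
    (A⁻¹).val ∈ S := by
  let T : Subalgebra R (Matrix (Fin n) (Fin n) R) :=
    S.toSubalgebra fun r =>
      Algebra.algebraMap_eq_smul_one (A := Matrix (Fin n) (Fin n) R) r ▸ hscal r
  exact Algebra.adjoin_le (S := T) (Set.singleton_subset_iff.mpr hA) (Matrix.inv_mem_adjoin A)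

/-- Let `R` be a commutative ring and `n ≥ 1`. If `S` is a subring of `Mₙ(R)` containing
all scalar matrices `r • I` with `r ∈ R`, then every matrix in `S` invertible in `Mₙ(R)`
has its inverse in `S` (i.e. `S ∩ U(Mₙ(R)) = U(S)`). -/
theorem stmt_9 {R : Type*} [CommRing R]
    (n : ℕ) (hn : 1 ≤ n)
    (S : Subring (Matrix (Fin n) (Fin n) R))
    (hscal : ∀ r : R, r • (1 : Matrix (Fin n) (Fin n) R) ∈ S)
    (A : (Matrix (Fin n) (Fin n) R)ˣ) (hA : A.val ∈ S) :
    (A⁻¹).val ∈ S :=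
  stmt_9_general n S hscal A hA
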